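/- arXiv:1512.08873 — 13 statements merged into one kernel-verified Lean document; each statement's English description precedes it below -/
import Mathlib

section
/- For every routing table rt, every routing-table entry r = (dip, dsn, f, hops, nhip, pre), and every destination dip' ∈ IP, the destination sequence number never decreases under update: sqn(rt, dip') ≤ sqn(upd(rt, r), dip'). -/
variable {IP : Type*}

/-- A routing table: for each destination, optionally an entry
    `(dsn, flag, hops, nhip, pre)`. -/
abbrev RT (IP : Type*) := IP → Option (ℕ × Bool × ℕ × IP × Set IP)

/-- Destination sequence number of the entry at `dip` (0 if no entry). -/
def sqn (rt : RT IP) (dip : IP) : ℕ :=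
  match rt dip with
  | none => 0
  | some e => e.1

/-- Known destinations. -/
def kD (rt : RT IP) : Set IP := {dip | rt dip ≠ none}

/-- Valid destinations. -/
def vD (rt : RT IP) : Set IP :=
  {dip | ∃ dsn hops nhip pre, rt dip = some (dsn, true, hops, nhip, pre)}

/-- Next hop of the entry at `dip` (junk value `dip` if no entry). -/
def nhop (rt : RT IP) (dip : IP) : IP :=
  match rt dip with
  | none => dip
  | some e => e.2.2.2.1

/-- Hop count of the entry at `dip` (0 if no entry). -/
def dhops (rt : RT IP) (dip : IP) : ℕ :=
  match rt dip with
  | none => 0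
  | some e => e.2.2.1

/-- Net sequence number: `sqn` if the entry is valid or `sqn = 0`,
    otherwise `sqn - 1` (truncated subtraction). -/
def nsqn (rt : RT IP) (dip : IP) : ℕ :=
  match rt dip with
  | none => 0
  | some e => if e.2.1 = true ∨ e.1 = 0 then e.1 else e.1 - 1

/-- The AODV routing-table update function. -/
def upd [DecidableEq IP] (rt : RT IP) (r : IP × ℕ × Bool × ℕ × IP × Set IP) : RT IP :=
  fun ip =>
    if ip = r.1 then
      match rt r.1, r.2 with
      | none, e => some e
      | some (dsn₀, f₀, hops₀, nhip₀, pre₀), (dsn, f, hops, nhip, pre) =>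
        if dsn₀ < dsn then some (dsn, f, hops, nhip, pre ∪ pre₀)
        else if dsn₀ = dsn ∧ hops < hops₀ then some (dsn, f, hops, nhip, pre ∪ pre₀)
        else if dsn₀ = dsn ∧ f₀ = false then some (dsn, f, hops, nhip, pre ∪ pre₀)
        else if dsn = 0 then some (dsn₀, f, hops, nhip, pre ∪ pre₀)
        else some (dsn₀, f₀, hops₀, nhip₀, pre₀ ∪ pre)
    else rt ip

/-- The AODV route-invalidation function. -/
def inv (rt : RT IP) (dests : IP → Option ℕ) : RT IP :=
  fun rip =>
    match dests rip, rt rip with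
    | some rsn, some (_, _, hops₀, nhip₀, pre₀) => some (rsn, false, hops₀, nhip₀, pre₀)
    | _, _ => rt rip

/-- The AODV precursor-addition function. -/
def addpre [DecidableEq IP] (rt : RT IP) (dip : IP) (npre : Set IP) : RT IP :=
  fun ip =>
    if ip = dip then
      match rt dip with
      | none => none
      | some (dsn₀, f₀, hops₀, nhip₀, pre₀) => some (dsn₀, f₀, hops₀, nhip₀, pre₀ ∪ npre)
    else rt ip

/-- The net-sequence-number invariant for a family of routing tables. -/
def NsqnInv (rt : IP → RT IP) : Prop :=
  ∀ ip dip, dip ∈ kD (rt ip) → nhop (rt ip) dip ≠ dip →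
    dip ∈ kD (rt (nhop (rt ip) dip)) ∧
      nsqn (rt ip) dip ≤ nsqn (rt (nhop (rt ip) dip)) dip

/-- destination sequence numbers never decrease under update. -/
theorem sqn_upd_mono [DecidableEq IP] (rt : RT IP)
    (r : IP × ℕ × Bool × ℕ × IP × Set IP) (dip' : IP) :
    sqn rt dip' ≤ sqn (upd rt r) dip' := by
  obtain ⟨rip, dsn, f, hops, nhip, pre⟩ := r
  unfold sqn upd
  by_cases hd : dip' = rip
  · subst hd
    rcases h : rt dip' with _ | ⟨dsn₀, f₀, hops₀, nhip₀, pre₀⟩ <;>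
      simp only [if_pos rfl, h] <;> split_ifs <;> simp <;> omega
  · simp [hd]
end

section
/- For every routing table rt and every routing-table entry r = (dip, dsn, f, hops, nhip, pre) whose validity flag f is true (a valid entry), the net sequence number never decreases under update: for every destination dip' ∈ IP, nsqn(rt, dip') ≤ nsqn(upd(rt, r), dip'). -/
variable {IP : Type*}

/-- updating with a valid entry never decreases net sequence numbers. -/
theorem nsqn_upd_mono [DecidableEq IP] (rt : RT IP)
    (r : IP × ℕ × Bool × ℕ × IP × Set IP) (hvalid : r.2.2.1 = true) (dip' : IP) :
    nsqn rt dip' ≤ nsqn (upd rt r) dip' := by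
  obtain ⟨dip, dsn, f, hops, nhip, pre⟩ := r
  simp only at hvalid
  subst hvalid
  by_cases h : dip' = dip
  · subst h
    unfold nsqn upd
    rcases hrt : rt dip' with _ | ⟨dsn₀, f₀, hops₀, nhip₀, pre₀⟩ <;>
      simp [hrt] <;> split_ifs <;> simp_all <;> omega
  · simp [nsqn, upd, h]
end

section
/- Let rt be a routing table and dests : IP → Option ℕ be such that whenever dests rip = some rsn and rip ∈ kD(rt), then rsn = sqn(rt, rip) + 1. Then for every dip ∈ IP, nsqn(rt, dip) ≤ nsqn(inv(rt, dests), dip). Moreover, if in addition rip ∈ vD(rt) for every rip with dests rip ≠ none and rip ∈ kD(rt), then nsqn(inv(rt, dests), dip) = nsqn(rt, dip) for every dip ∈ IP (invalidating a valid entry while incrementing its sequence number leaves the net sequence number unchanged). -/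
variable {IP : Type*}

/-- if invalidation increments the stored sequence number, net
    sequence numbers never decrease; and if moreover only valid entries are
    invalidated, net sequence numbers are unchanged. -/
theorem nsqn_inv (rt : RT IP) (dests : IP → Option ℕ)
    (h : ∀ rip rsn, dests rip = some rsn → rip ∈ kD rt → rsn = sqn rt rip + 1) :
    (∀ dip, nsqn rt dip ≤ nsqn (inv rt dests) dip) ∧
    ((∀ rip, dests rip ≠ none → rip ∈ kD rt → rip ∈ vD rt) →
      ∀ dip, nsqn (inv rt dests) dip = nsqn rt dip) := by
  have key : ∀ dip, nsqn (inv rt dests) dip =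
      match dests dip, rt dip with
      | some _, some e => e.1
      | _, _ => nsqn rt dip := by
    intro dip
    rcases hd : dests dip with _ | rsn <;> rcases hr : rt dip with _ | e <;>
      simp only [nsqn, inv, hd, hr]
    have hk : dip ∈ kD rt := by simp [kD, hr]
    have := h dip rsn hd hk
    simp [sqn, hr] at this
    simp [this]
  constructor
  · intro dip
    rw [key dip]
    rcases hd : dests dip with _ | rsn <;> rcases hr : rt dip with _ | e <;>
      simp [nsqn, hr]
    split <;> omega
  · intro hv dip
    rw [key dip]
    rcases hd : dests dip with _ | rsn <;> rcases hr : rt dip with _ | e <;>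
      simp [nsqn, hr]
    have := hv dip (by simp [hd]) (by simp [kD, hr])
    simp [vD, hr] at this
    obtain ⟨dsn, hops, nhip, pre, heq⟩ := this
    subst heq
    simp
end

section
/- Let rt be a routing table and dests : IP → Option ℕ be such that whenever dests rip = some rsn and rip ∈ kD(rt), then rsn = sqn(rt, rip) + 1. Then the destination sequence numbers never decrease under invalidation: for every dip ∈ IP, sqn(rt, dip) ≤ sqn(inv(rt, dests), dip). -/
variable {IP : Type*}

/-- if invalidation increments the stored sequence number,
    destination sequence numbers never decrease under invalidation. -/
theorem sqn_inv_mono (rt : RT IP) (dests : IP → Option ℕ)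
    (h : ∀ rip rsn, dests rip = some rsn → rip ∈ kD rt → rsn = sqn rt rip + 1)
    (dip : IP) : sqn rt dip ≤ sqn (inv rt dests) dip := by
  unfold sqn inv
  cases hd : dests dip with
  | none => cases rt dip <;> simp
  | some rsn =>
    cases hr : rt dip with
    | none => simp
    | some e =>
      obtain ⟨a,b,c,d,p⟩ := e
      have := h dip rsn hd (by simp [kD, hr])
      simp [sqn, hr] at this
      simp [this]
end

section
/- Define a step relation on routing tables: rt ⟶ rt' iff (i) rt' = upd(rt, r) for some entry r whose validity flag is true, or (ii) rt' = inv(rt, dests) for some dests : IP → Option ℕ such that whenever dests rip = some rsn and rip ∈ kD(rt), then rip ∈ vD(rt) and rsn = sqn(rt, rip) + 1, or (iii) rt' = addpre(rt, dip, npre) for some dip ∈ IP and npre ⊆ IP. If rt' is reachable from rt under the reflexive-transitive closure of ⟶, then kD(rt) ⊆ kD(rt') and, for every dip ∈ IP, nsqn(rt, dip) ≤ nsqn(rt', dip). (Proposition 2 of the paper: under the AODV routing-table operations, an entry is never deleted and its net sequence number never decreases.) -/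
variable {IP : Type*}

/-- One step of modification of a routing table by the AODV operations. -/
def Step [DecidableEq IP] (rt rt' : RT IP) : Prop :=
  (∃ r : IP × ℕ × Bool × ℕ × IP × Set IP, r.2.2.1 = true ∧ rt' = upd rt r) ∨
  (∃ dests : IP → Option ℕ,
      (∀ rip rsn, dests rip = some rsn → rip ∈ kD rt →
        rip ∈ vD rt ∧ rsn = sqn rt rip + 1) ∧
      rt' = inv rt dests) ∨
  (∃ (dip : IP) (npre : Set IP), rt' = addpre rt dip npre)

lemma step_mono [DecidableEq IP] {rt rt' : RT IP} (h : Step rt rt') :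
    kD rt ⊆ kD rt' ∧ ∀ dip, nsqn rt dip ≤ nsqn rt' dip := by
  rcases h with ⟨r, hf, rfl⟩ | ⟨dests, hd, rfl⟩ | ⟨dip, npre, rfl⟩
  · obtain ⟨dip, dsn, f, hops, nhip, pre⟩ := r
    simp only at hf
    subst hf
    have key : ∀ ip, ip = dip → nsqn rt ip ≤ nsqn (upd rt (dip, dsn, true, hops, nhip, pre)) ip
        ∧ upd rt (dip, dsn, true, hops, nhip, pre) ip ≠ none := by
      intro ip hip'
      subst hip'
      cases h0 : rt ip with
      | none =>
        have hupd : upd rt (ip, dsn, true, hops, nhip, pre) ip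
            = some (dsn, true, hops, nhip, pre) := by
          simp [upd, h0]
        constructor
        · simp [nsqn, h0, hupd]
        · simp [hupd]
      | some e =>
        obtain ⟨dsn₀, f₀, hops₀, nhip₀, pre₀⟩ := e
        have hupd : upd rt (ip, dsn, true, hops, nhip, pre) ip =
            (if dsn₀ < dsn then some (dsn, true, hops, nhip, pre ∪ pre₀)
            else if dsn₀ = dsn ∧ hops < hops₀ then some (dsn, true, hops, nhip, pre ∪ pre₀)
            else if dsn₀ = dsn ∧ f₀ = false then some (dsn, true, hops, nhip, pre ∪ pre₀)
            else if dsn = 0 then some (dsn₀, true, hops, nhip, pre ∪ pre₀)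
            else some (dsn₀, f₀, hops₀, nhip₀, pre₀ ∪ pre)) := by
          simp [upd, h0]
        have hle : nsqn rt ip ≤ dsn₀ := by
          simp only [nsqn, h0]
          split <;> omega
        by_cases h1 : dsn₀ < dsn
        · rw [if_pos h1] at hupd
          refine ⟨?_, by simp [hupd]⟩
          simp only [nsqn, h0, hupd]
          split <;> split <;> first | omega | simp_all
        · rw [if_neg h1] at hupd
          by_cases h2 : dsn₀ = dsn ∧ hops < hops₀
          · rw [if_pos h2] at hupd
            refine ⟨?_, by simp [hupd]⟩
            simp only [nsqn, h0, hupd]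
            have := h2.1
            split <;> split <;> first | omega | simp_all
          · rw [if_neg h2] at hupd
            by_cases h3 : dsn₀ = dsn ∧ f₀ = false
            · rw [if_pos h3] at hupd
              refine ⟨?_, by simp [hupd]⟩
              simp only [nsqn, h0, hupd]
              have := h3.1
              split <;> split <;> first | omega | simp_all
            · rw [if_neg h3] at hupd
              by_cases h4 : dsn = 0
              · rw [if_pos h4] at hupd
                refine ⟨?_, by simp [hupd]⟩
                simp only [nsqn, h0, hupd]
                split <;> split <;> first | omega | simp_all
              · rw [if_neg h4] at hupd
                refine ⟨?_, by simp [hupd]⟩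
                simp [nsqn, h0, hupd]
    constructor
    · intro ip hip
      simp only [kD, Set.mem_setOf_eq] at hip ⊢
      by_cases hip' : ip = dip
      · exact (key ip hip').2
      · simpa [upd, hip'] using hip
    · intro ip
      by_cases hip' : ip = dip
      · exact (key ip hip').1
      · simp [nsqn, upd, hip']
  · constructor
    · intro ip hip
      simp only [kD, Set.mem_setOf_eq, inv] at hip ⊢
      cases hdest : dests ip with
      | none => cases h0 : rt ip <;> simp_all
      | some rsn =>
        cases h0 : rt ip with
        | none => simp_all
        | some e => obtain ⟨a, b, c, d, e⟩ := e; simp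
    · intro ip
      simp only [nsqn, inv]
      cases hdest : dests ip with
      | none =>
        cases rt ip <;> simp
      | some rsn =>
        cases h0 : rt ip with
        | none => simp [h0]
        | some e =>
          obtain ⟨dsn₀, f₀, hops₀, nhip₀, pre₀⟩ := e
          have hk : ip ∈ kD rt := by simp [kD, h0]
          obtain ⟨hv, hrsn⟩ := hd ip rsn hdest hk
          obtain ⟨a, b, c, d, hv⟩ := hv
          rw [h0] at hv
          have hf0 : f₀ = true := by injection hv with hv; cases hv; rfl
          have hsqn : sqn rt ip = dsn₀ := by simp [sqn, h0]
          rw [hsqn] at hrsn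
          subst hrsn hf0
          simp [h0]
  · constructor
    · intro ip hip
      simp only [kD, Set.mem_setOf_eq, addpre] at hip ⊢
      by_cases hip' : ip = dip
      · subst hip'
        simp only [if_pos rfl] at hip ⊢
        cases h0 : rt ip with
        | none => simp_all
        | some e => obtain ⟨a, b, c, d, e⟩ := e; simp_all
      · simpa [hip'] using hip
    · intro ip
      simp only [nsqn, addpre]
      by_cases hip' : ip = dip
      · subst hip'
        simp only [if_pos rfl]
        cases h0 : rt ip with
        | none => simp
        | some e => obtain ⟨a, b, c, d, e⟩ := e; simp
      · simp [hip']

/-- Proposition 2: under the AODV routing-table operations an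
    entry is never deleted and its net sequence number never decreases. -/
theorem kD_nsqn_mono [DecidableEq IP] (rt rt' : RT IP)
    (h : Relation.ReflTransGen Step rt rt') :
    kD rt ⊆ kD rt' ∧ ∀ dip, nsqn rt dip ≤ nsqn rt' dip := by
  induction h with
  | refl => exact ⟨subset_rfl, fun _ => le_refl _⟩
  | tail _ hstep ih =>
    obtain ⟨hk, hn⟩ := step_mono hstep
    exact ⟨ih.1.trans hk, fun dip => (ih.2 dip).trans (hn dip)⟩
end

section
/- Let rt : IP → (IP → Option (ℕ × Bool × ℕ × IP × Set IP)) be a family of routing tables satisfying the net-sequence-number invariant. Let a ∈ IP and dests : IP → Option ℕ be such that whenever dests rip = some rsn and rip ∈ kD(rt a), then rip ∈ vD(rt a) and rsn = sqn(rt a, rip) + 1. Define rt' by rt' a = inv(rt a, dests) and rt' ip = rt ip for ip ≠ a. Then rt' satisfies the net-sequence-number invariant. (Route-invalidation case of the proof of Proposition 3.) -/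
variable {IP : Type*}

lemma inv_none {r : RT IP} {dests : IP → Option ℕ} (dip : IP) :
    inv r dests dip = none ↔ r dip = none := by
  unfold inv
  rcases h1 : dests dip with _ | rsn <;>
    rcases h2 : r dip with _ | ⟨d, f, h, n, p⟩ <;> simp [h1, h2]

lemma inv_kD {r : RT IP} {dests : IP → Option ℕ} (dip : IP) :
    dip ∈ kD (inv r dests) ↔ dip ∈ kD r := by
  simp [kD, inv_none]

lemma inv_nhop {r : RT IP} {dests : IP → Option ℕ} (dip : IP) :
    nhop (inv r dests) dip = nhop r dip := by
  unfold nhop inv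
  rcases h1 : dests dip with _ | rsn <;>
    rcases h2 : r dip with _ | ⟨d, f, h, n, p⟩ <;> simp [h1, h2]

lemma inv_nsqn (r : RT IP) (dests : IP → Option ℕ)
    (hd : ∀ rip rsn, dests rip = some rsn → rip ∈ kD r →
      rip ∈ vD r ∧ rsn = sqn r rip + 1) (dip : IP) :
    nsqn (inv r dests) dip = nsqn r dip := by
  unfold nsqn inv
  rcases h1 : dests dip with _ | rsn
  · rcases h2 : r dip with _ | e <;> simp [h1, h2]
  · rcases h2 : r dip with _ | ⟨d, f, h, n, p⟩
    · simp [h1, h2]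
    · obtain ⟨hv, hs⟩ := hd dip rsn h1 (by simp [kD, h2])
      obtain ⟨d', h', n', p', he⟩ := hv
      rw [h2] at he
      simp only [Option.some.injEq, Prod.mk.injEq] at he
      obtain ⟨hde, hf, -⟩ := he
      have hsq : sqn r dip = d := by simp [sqn, h2]
      rw [hsq] at hs
      subst hf hs
      simp [h1, h2]

/-- route-invalidation case of Proposition 3: invalidating, at
    one node, valid entries while incrementing their sequence numbers
    preserves the net-sequence-number invariant. -/
theorem nsqnInv_inv [DecidableEq IP] (rt : IP → RT IP) (hinv : NsqnInv rt)
    (a : IP) (dests : IP → Option ℕ)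
    (hd : ∀ rip rsn, dests rip = some rsn → rip ∈ kD (rt a) →
      rip ∈ vD (rt a) ∧ rsn = sqn (rt a) rip + 1) :
    NsqnInv (Function.update rt a (inv (rt a) dests)) := by
  intro ip dip hk hnh
  set rt' := Function.update rt a (inv (rt a) dests) with hrt'
  have hkD : ∀ x dip, dip ∈ kD (rt' x) ↔ dip ∈ kD (rt x) := by
    intro x dip
    by_cases h : x = a
    · rw [h, hrt', Function.update_self]; exact inv_kD dip
    · rw [hrt', Function.update_of_ne h]
  have hnhop : ∀ x dip, nhop (rt' x) dip = nhop (rt x) dip := by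
    intro x dip
    by_cases h : x = a
    · rw [h, hrt', Function.update_self]; exact inv_nhop dip
    · rw [hrt', Function.update_of_ne h]
  have hnsqn : ∀ x dip, nsqn (rt' x) dip = nsqn (rt x) dip := by
    intro x dip
    by_cases h : x = a
    · rw [h, hrt', Function.update_self]; exact inv_nsqn (rt a) dests hd dip
    · rw [hrt', Function.update_of_ne h]
  rw [hkD] at hk
  rw [hnhop] at hnh ⊢
  obtain ⟨h1, h2⟩ := hinv ip dip hk hnh
  exact ⟨(hkD _ _).mpr h1, by rw [hnsqn, hnsqn]; exact h2⟩
end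

section
/- Let rt : IP → (IP → Option (ℕ × Bool × ℕ × IP × Set IP)) be a family of routing tables satisfying the net-sequence-number invariant, and let a, sip ∈ IP. Define rt' by rt' a = upd(rt a, (sip, 0, true, 1, sip, ∅)) and rt' ip = rt ip for ip ≠ a. Then rt' satisfies the net-sequence-number invariant. (The case of the proof of Proposition 3 where a node inserts a neighbour entry (sip, 0, valid, 1, sip, ∅), Lines 10/14/18 of the main AODV process.) -/
variable {IP : Type*}

private lemma upd_ne' [DecidableEq IP] (rt : RT IP) (r : IP × ℕ × Bool × ℕ × IP × Set IP)
    (dip : IP) (h : dip ≠ r.1) : upd rt r dip = rt dip := by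
  simp [upd, h]

private lemma key_upd [DecidableEq IP] (rt : RT IP) (sip : IP) :
    (upd rt (sip, 0, true, 1, sip, (∅ : Set IP)) sip ≠ none) ∧
    nhop (upd rt (sip, 0, true, 1, sip, (∅ : Set IP))) sip = sip ∧
    nsqn rt sip ≤ nsqn (upd rt (sip, 0, true, 1, sip, (∅ : Set IP))) sip := by
  unfold upd nhop nsqn
  cases h : rt sip with
  | none => simp [h]
  | some e =>
    obtain ⟨dsn₀, f₀, hops₀, nhip₀, pre₀⟩ := e
    simp only [h, if_pos rfl]
    split_ifs <;> simp_all <;> omega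

/-- neighbour-entry case of Proposition 3: inserting the entry
    `(sip, 0, valid, 1, sip, ∅)` at one node preserves the
    net-sequence-number invariant. -/
theorem nsqnInv_upd_neighbour [DecidableEq IP] (rt : IP → RT IP) (hinv : NsqnInv rt)
    (a sip : IP) :
    NsqnInv (Function.update rt a (upd (rt a) (sip, 0, true, 1, sip, (∅ : Set IP)))) := by
  intro ip dip hk hn
  set u := upd (rt a) (sip, 0, true, 1, sip, (∅ : Set IP)) with hu
  obtain ⟨hne, hnh, hle⟩ := key_upd (rt a) sip
  by_cases hip : ip = a
  · subst hip
    rw [Function.update_self] at hk hn ⊢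
    by_cases hd : dip = sip
    · subst hd; exact absurd hnh hn
    · have hud : u dip = rt ip dip := upd_ne' _ _ _ hd
      have hk' : dip ∈ kD (rt ip) := by simpa [kD, hud] using hk
      have hnhop : nhop u dip = nhop (rt ip) dip := by simp [nhop, hud]
      rw [hnhop] at hn ⊢
      obtain ⟨h1, h2⟩ := hinv ip dip hk' hn
      have hnsq : nsqn u dip = nsqn (rt ip) dip := by simp [nsqn, hud]
      rw [hnsq]
      by_cases hna : nhop (rt ip) dip = ip
      · rw [hna, Function.update_self]
        rw [hna] at h1 h2
        exact ⟨by simpa [kD, hud] using h1, by simpa [nsqn, hud] using h2⟩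
      · rw [Function.update_of_ne hna]; exact ⟨h1, h2⟩
  · rw [Function.update_of_ne hip] at hk hn ⊢
    obtain ⟨h1, h2⟩ := hinv ip dip hk hn
    by_cases hna : nhop (rt ip) dip = a
    · rw [hna, Function.update_self]
      rw [hna] at h1 h2
      by_cases hd : dip = sip
      · subst hd
        exact ⟨hne, le_trans h2 hle⟩
      · have hud : u dip = rt a dip := upd_ne' _ _ _ hd
        exact ⟨by simpa [kD, hud] using h1, by simpa [nsqn, hud] using h2⟩
    · rw [Function.update_of_ne hna]; exact ⟨h1, h2⟩
end

section
/- Let IP be a type, dip ∈ IP, vD ⊆ IP (the nodes with a valid routing-table entry for destination dip), sqn, dhops : IP → ℕ and nhop : IP → IP. Define the routing-graph edge relation E on IP by: E ip ip' iff ip ≠ dip, ip ∈ vD and ip' = nhop ip. Assume the invariant of Theorem 1: for every ip ∈ vD with ip ≠ dip, if nhop ip ∈ vD and nhop ip ≠ dip, then either sqn ip < sqn (nhop ip), or sqn ip = sqn (nhop ip) and dhops (nhop ip) < dhops ip. Then the routing graph is loop free: there is no ip ∈ IP with (ip, ip) in the transitive closure of E. (Theorem 2 of the paper: the invariant of Theorem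 1 implies loop freedom of the routing graph for every destination.) -/
/-- Theorem 2: the invariant of Theorem 1 implies loop freedom
    of the routing graph for destination `dip`. -/
theorem routing_graph_loop_free {IP : Type*} (dip : IP) (vD : Set IP)
    (sqn dhops : IP → ℕ) (nhop : IP → IP)
    (hinv : ∀ ip, ip ∈ vD → ip ≠ dip → nhop ip ∈ vD → nhop ip ≠ dip →
      sqn ip < sqn (nhop ip) ∨
        (sqn ip = sqn (nhop ip) ∧ dhops (nhop ip) < dhops ip)) :
    ∀ ip : IP,
      ¬ Relation.TransGen (fun x y => x ≠ dip ∧ x ∈ vD ∧ y = nhop x) ip ip := by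
  set E : IP → IP → Prop := fun x y => x ≠ dip ∧ x ∈ vD ∧ y = nhop x with hE
  have key : ∀ a b : IP, Relation.TransGen E a b → b ≠ dip → b ∈ vD →
      sqn a < sqn b ∨ (sqn a = sqn b ∧ dhops b < dhops a) := by
    intro a b h
    induction h with
    | single h =>
      intro hbd hbv
      obtain ⟨had, hav, hb⟩ := h
      subst hb
      exact hinv a hav had hbv hbd
    | tail hac hcb ih =>
      intro hbd hbv
      obtain ⟨hcd, hcv, hb⟩ := hcb
      subst hb
      have step := hinv _ hcv hcd hbv hbd
      have prev := ih hcd hcv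
      rcases prev with h1 | ⟨h1, h2⟩ <;> rcases step with h3 | ⟨h3, h4⟩
      · exact Or.inl (h1.trans h3)
      · exact Or.inl (h3 ▸ h1)
      · exact Or.inl (h1 ▸ h3)
      · exact Or.inr ⟨h1.trans h3, h4.trans h2⟩
  intro ip hcyc
  have hhead : ∀ a b : IP, Relation.TransGen E a b → a ≠ dip ∧ a ∈ vD := by
    intro a b h
    induction h using Relation.TransGen.head_induction_on with
    | single h => exact ⟨h.1, h.2.1⟩
    | head h _ _ => exact ⟨h.1, h.2.1⟩
  rcases key ip ip hcyc (hhead ip ip hcyc).1 (hhead ip ip hcyc).2 with h1 | ⟨_, h2⟩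
  · exact lt_irrefl _ h1
  · exact lt_irrefl _ h2
end

section
/- Let upd₀ be defined exactly like upd except that in case (5) (existing entry, none of cases (2)–(4) applies, and dsn = 0) the new entry is (dsn, f, hops, nhip, pre ∪ pre₀), i.e., the unknown sequence number 0 overwrites the stored sequence number. If IP is inhabited, then sequence-number monotonicity fails for upd₀: there exist a routing table rt and an entry r = (dip, 0, true, hops, nhip, pre) with sqn(upd₀(rt, r), dip) < sqn(rt, dip). (Section 5.1.2: the interpretation that updates a known sequence number to 0, as implemented in AODV-UIUC and AODV-UCSB, allows destination sequence numbers to decrease and can yield routing loops.) -/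
variable {IP : Type*}

/-- The variant of `upd` in which, in case (5), the unknown sequence number 0
    overwrites the stored sequence number. -/
def updZ [DecidableEq IP] (rt : RT IP) (r : IP × ℕ × Bool × ℕ × IP × Set IP) : RT IP :=
  fun ip =>
    if ip = r.1 then
      match rt r.1, r.2 with
      | none, e => some e
      | some (dsn₀, f₀, hops₀, nhip₀, pre₀), (dsn, f, hops, nhip, pre) =>
        if dsn₀ < dsn then some (dsn, f, hops, nhip, pre ∪ pre₀)
        else if dsn₀ = dsn ∧ hops < hops₀ then some (dsn, f, hops, nhip, pre ∪ pre₀)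
        else if dsn₀ = dsn ∧ f₀ = false then some (dsn, f, hops, nhip, pre ∪ pre₀)
        else if dsn = 0 then some (dsn, f, hops, nhip, pre ∪ pre₀)
        else some (dsn₀, f₀, hops₀, nhip₀, pre₀ ∪ pre)
    else rt ip

/-- Section 5.1.2: sequence-number monotonicity fails for the
    interpretation that overwrites a known sequence number with 0. -/
theorem updZ_not_mono [DecidableEq IP] [Inhabited IP] :
    ∃ (rt : RT IP) (dip : IP) (hops : ℕ) (nhip : IP) (pre : Set IP),
      sqn (updZ rt (dip, 0, true, hops, nhip, pre)) dip < sqn rt dip := by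
  refine ⟨fun _ => some (1, true, 0, default, ∅), default, 0, default, ∅, ?_⟩
  simp [updZ, sqn]
end

section
/- Without the requirement that the new sequence number increments the stored one, invalidation can decrease the net sequence number: if IP is inhabited, there exist a routing table rt, a partial function dests : IP → Option ℕ, and a destination dip ∈ IP such that nsqn(inv(rt, dests), dip) < nsqn(rt, dip). (Resolutions (a) and (b) of the RFC contradiction—always copying the destination sequence number from the incoming route error message—violate the monotonicity of net sequence numbers asserted in Proposition 2.) -/
variable {IP : Type*}

/-- without the increment requirement, invalidation can
    decrease the net sequence number. -/
theorem inv_not_nsqn_mono [Inhabited IP] :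
    ∃ (rt : RT IP) (dests : IP → Option ℕ) (dip : IP),
      nsqn (inv rt dests) dip < nsqn rt dip := by
  refine ⟨fun _ => some (2, true, 0, default, ∅), fun _ => some 0, default, ?_⟩
  simp [nsqn, inv]
end

section
/- Define inv_max(rt, dests) exactly like inv except that the new sequence number of the modified entry is max(rsn, dsn₀) instead of rsn. Then net-sequence-number monotonicity fails for inv_max: if IP is inhabited, there exist a routing table rt, a partial function dests : IP → Option ℕ, and a destination dip ∈ IP such that nsqn(inv_max(rt, dests), dip) < nsqn(rt, dip). (Resolution (c) of the RFC contradiction—always invalidating and taking the maximum max(m, n) of the stored and received sequence numbers—violates Proposition 2.) -/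
variable {IP : Type*}

/-- The variant of `inv` taking `max(rsn, dsn₀)` as new sequence number. -/
def invMax (rt : RT IP) (dests : IP → Option ℕ) : RT IP :=
  fun rip =>
    match dests rip, rt rip with
    | some rsn, some (dsn₀, _, hops₀, nhip₀, pre₀) =>
        some (max rsn dsn₀, false, hops₀, nhip₀, pre₀)
    | _, _ => rt rip

/-- resolution (c): net-sequence-number monotonicity fails for
    `invMax`. -/
theorem invMax_not_nsqn_mono [Inhabited IP] :
    ∃ (rt : RT IP) (dests : IP → Option ℕ) (dip : IP),
      nsqn (invMax rt dests) dip < nsqn rt dip := by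
  refine ⟨fun _ => some (1, true, 0, default, ∅), fun _ => some 0, default, ?_⟩
  simp [nsqn, invMax]
end

section
/- Define inv₊(rt, dests) exactly like inv except that the new sequence number of the modified entry is max(rsn, dsn₀ + 1) instead of rsn. Then for every routing table rt, every dests : IP → Option ℕ, and every dip ∈ IP, nsqn(rt, dip) ≤ nsqn(inv₊(rt, dests), dip). (Resolution (d) of the RFC contradiction—always invalidating and updating the destination sequence number to max(m, n + 1)—never decreases net sequence numbers.) -/
variable {IP : Type*}

/-- The variant of `inv` taking `max(rsn, dsn₀ + 1)` as new sequence number. -/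
def invP (rt : RT IP) (dests : IP → Option ℕ) : RT IP :=
  fun rip =>
    match dests rip, rt rip with
    | some rsn, some (dsn₀, _, hops₀, nhip₀, pre₀) =>
        some (max rsn (dsn₀ + 1), false, hops₀, nhip₀, pre₀)
    | _, _ => rt rip

/-- resolution (d): `invP` never decreases net sequence
    numbers. -/
theorem invP_nsqn_mono (rt : RT IP) (dests : IP → Option ℕ) (dip : IP) :
    nsqn rt dip ≤ nsqn (invP rt dests) dip := by
  unfold nsqn invP
  cases hd : dests dip <;> cases hr : rt dip <;> simp_all <;>
  · rename_i e
    obtain ⟨a,b,c,d,p⟩ := e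
    simp only []
    split <;> omega
end

section
/- Define inv₍>₎(rt, dests) exactly like inv except that the entry at rip is modified only when rsn > dsn₀ (if rsn ≤ dsn₀ the entry is left completely unchanged). Then for every routing table rt, every dests : IP → Option ℕ, and every dip ∈ IP, nsqn(rt, dip) ≤ nsqn(inv₍>₎(rt, dests), dip). (Resolution (f) of the RFC contradiction, the one adopted in the paper's specification—invalidating the routing table entry only if the received sequence number m exceeds the stored one n—never decreases net sequence numbers.) -/
variable {IP : Type*}

/-- The variant of `inv` modifying an entry only when `rsn > dsn₀`. -/
def invGt (rt : RT IP) (dests : IP → Option ℕ) : RT IP :=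
  fun rip =>
    match dests rip, rt rip with
    | some rsn, some (dsn₀, f₀, hops₀, nhip₀, pre₀) =>
        if dsn₀ < rsn then some (rsn, false, hops₀, nhip₀, pre₀)
        else some (dsn₀, f₀, hops₀, nhip₀, pre₀)
    | _, _ => rt rip

/-- resolution (f), adopted in the paper: `invGt` never
    decreases net sequence numbers. -/
theorem invGt_nsqn_mono (rt : RT IP) (dests : IP → Option ℕ) (dip : IP) :
    nsqn rt dip ≤ nsqn (invGt rt dests) dip := by
  unfold nsqn invGt
  cases hd : dests dip with
  | none => cases rt dip <;> simp
  | some rsn =>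
    cases he : rt dip with
    | none => simp
    | some e =>
      obtain ⟨dsn₀, f₀, hops₀, nhip₀, pre₀⟩ := e
      by_cases h : dsn₀ < rsn <;> simp only [h, if_pos, if_neg, if_true, if_false] <;>
        first | rfl | (split <;> split <;> simp_all <;> omega)
end
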